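/- For c ≠ d, c, d > 0, μ > ν > 0, the function N(t) = N₀ t^(μ−ν−1)/(c^ν − d^ν) · [E_{ν,μ−ν}(−d^ν t^ν) − E_{ν,μ−ν}(−c^ν t^ν)] solves the fractional integral equation N(t) − N₀ t^(μ−1) E_{ν,μ}(−d^ν t^ν) = −c^ν (₀D_t^(−ν) N)(t) for t > 0. -/

import Mathlib

/-!
With `β = μ - ν`, both Mittag-Leffler terms of `N` are series `∑ aₖ u ^ (β + kν - 1)`. The
Riemann–Liouville integral maps `u ^ (s - 1)` to `Γ(s) / Γ(s + ν) · t ^ (s + ν - 1)` (a Beta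
integral), and integrating termwise, which the lower bound `Γ(s) ≥ R ^ (s - 1) e ^ (-R)` justifies,
raises the second parameter of the Mittag-Leffler function:
`₀D_t^(-ν) [u ^ (β - 1) E_{ν,β}(a u ^ ν)] = t ^ (β + ν - 1) E_{ν,β+ν}(a t ^ ν)`.
The recursion `E_{ν,β}(z) = 1 / Γ(β) + z E_{ν,β+ν}(z)` then reduces the equation to an algebraic
identity between `E_{ν,μ}(-c ^ ν t ^ ν)` and `E_{ν,μ}(-d ^ ν t ^ ν)`.
-/

open MeasureTheory Real Set intervalIntegral Filter

noncomputable def mittagLeffler (α β z : ℝ) : ℝ :=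
  ∑' k : ℕ, z ^ k / Gamma (β + k * α)

/-- `riemannLiouvilleIntegral ν f t` is `₀D_t^(-ν) f (t)`. -/
noncomputable def riemannLiouvilleIntegral (ν : ℝ) (f : ℝ → ℝ) (t : ℝ) : ℝ :=
  1 / Gamma ν * ∫ u in (0 : ℝ)..t, (t - u) ^ (ν - 1) * f u

theorem rpow_mul_exp_neg_le_Gamma {s R : ℝ} (hs : 1 ≤ s) (hR : 0 < R) :
    R ^ (s - 1) * exp (-R) ≤ Gamma s := by
  have hint : IntegrableOn (fun x => exp (-x) * x ^ (s - 1)) (Ioi 0) :=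
    Real.GammaIntegral_convergent (by linarith)
  calc R ^ (s - 1) * exp (-R) = ∫ x in Ioi R, R ^ (s - 1) * exp (-x) := by
        rw [MeasureTheory.integral_const_mul, integral_exp_neg_Ioi]
    _ ≤ ∫ x in Ioi R, exp (-x) * x ^ (s - 1) := by
        refine setIntegral_mono_on ?_ (hint.mono_set (Ioi_subset_Ioi hR.le)) measurableSet_Ioi
          fun x hx => ?_
        · exact (integrableOn_exp_neg_Ioi R).const_mul _
        · rw [mul_comm]
          gcongr
          exact hx.le
    _ ≤ ∫ x in Ioi 0, exp (-x) * x ^ (s - 1) :=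
        setIntegral_mono_set hint
          (ae_restrict_of_forall_mem measurableSet_Ioi fun x hx => by
            have : 0 < x := hx
            positivity)
          (Ioi_subset_Ioi hR.le).eventuallyLE
    _ = Gamma s := (Gamma_eq_integral (by linarith)).symm

section MittagLeffler

variable {α : ℝ}

theorem summable_norm_mittagLeffler_term (hα : 0 < α) (β z : ℝ) :
    Summable fun k : ℕ => ‖z ^ k / Gamma (β + k * α)‖ := by
  set R := (|z| + 1) ^ α⁻¹
  have hR : 0 < R := by positivity
  have hRα : R ^ α = |z| + 1 := by
    rw [← rpow_mul (by positivity), inv_mul_cancel₀ hα.ne', rpow_one]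
  set C := R ^ (β - 1) * exp (-R)
  have hC : 0 < C := by positivity
  have hq : |z| / (|z| + 1) < 1 := (div_lt_one (by positivity)).2 (lt_add_one _)
  refine Summable.of_norm_bounded_eventually_nat
    ((summable_geometric_of_lt_one (by positivity) hq).mul_left C⁻¹) ?_
  obtain ⟨K, hK⟩ := exists_nat_ge ((1 - β) / α)
  filter_upwards [eventually_ge_atTop K] with k hk
  have hs : 1 ≤ β + k * α := by
    have := (div_le_iff₀ hα).1 (hK.trans (Nat.cast_le.2 hk))
    linarith
  have hΓ : C * (|z| + 1) ^ k ≤ Gamma (β + k * α) := by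
    calc C * (|z| + 1) ^ k = R ^ (β + k * α - 1) * exp (-R) := by
          rw [← hRα, ← rpow_natCast, ← rpow_mul hR.le,
            show β + k * α - 1 = (β - 1) + α * k by ring, rpow_add hR]
          ring
      _ ≤ Gamma (β + k * α) := rpow_mul_exp_neg_le_Gamma hs hR
  have hΓpos : 0 < Gamma (β + k * α) := lt_of_lt_of_le (by positivity) hΓ
  rw [norm_norm, norm_div, norm_pow, Real.norm_of_nonneg hΓpos.le, div_pow, Real.norm_eq_abs,
    div_le_iff₀ hΓpos]
  calc |z| ^ k = C⁻¹ * (|z| ^ k / (|z| + 1) ^ k) * (C * (|z| + 1) ^ k) := by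
        field_simp
    _ ≤ C⁻¹ * (|z| ^ k / (|z| + 1) ^ k) * Gamma (β + k * α) := by gcongr

theorem summable_mittagLeffler_term (hα : 0 < α) (β z : ℝ) :
    Summable fun k : ℕ => z ^ k / Gamma (β + k * α) :=
  (summable_norm_mittagLeffler_term hα β z).of_norm

theorem mittagLeffler_eq_one_div_Gamma_add_mul (hα : 0 < α) (β z : ℝ) :
    mittagLeffler α β z = 1 / Gamma β + z * mittagLeffler α (β + α) z := by
  rw [mittagLeffler, (summable_mittagLeffler_term hα β z).tsum_eq_zero_add, mittagLeffler,
    ← tsum_mul_left]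
  congr 1
  · simp
  · refine tsum_congr fun k => ?_
    rw [pow_succ, show β + ((k + 1 : ℕ) : ℝ) * α = β + α + k * α by push_cast; ring]
    ring

theorem continuous_mittagLeffler (hα : 0 < α) (β : ℝ) : Continuous (mittagLeffler α β) := by
  refine continuous_iff_continuousAt.2 fun z => ?_
  refine (continuousOn_tsum (fun k => (continuous_pow k).div_const _ |>.continuousOn)
    (summable_norm_mittagLeffler_term hα β (|z| + 1)) fun k x hx => ?_).continuousAt
    (Icc_mem_nhds (sub_one_lt z) (lt_add_one z))
  rw [norm_div, norm_div, norm_pow, norm_pow]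
  gcongr
  rw [Real.norm_eq_abs, Real.norm_eq_abs, abs_of_pos (by positivity : 0 < |z| + 1), abs_le]
  constructor <;> linarith [hx.1, hx.2, neg_abs_le z, le_abs_self z]

theorem hasSum_rpow_mul_mittagLeffler (hα : 0 < α) (β a : ℝ) {u : ℝ} (hu : 0 < u) :
    HasSum (fun k : ℕ => a ^ k / Gamma (β + k * α) * u ^ (β + k * α - 1))
      (u ^ (β - 1) * mittagLeffler α β (a * u ^ α)) := by
  refine ((summable_mittagLeffler_term hα β (a * u ^ α)).hasSum.mul_left (u ^ (β - 1))).congr_fun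
    fun k => ?_
  rw [mul_pow, ← rpow_natCast (u ^ α), ← rpow_mul hu.le,
    show β + k * α - 1 = β - 1 + α * k by ring, rpow_add hu]
  ring

theorem rpow_mul_mittagLeffler_eq_div_Gamma_add (hα : 0 < α) (β a : ℝ) {u : ℝ} (hu : 0 < u) :
    u ^ (β - 1) * mittagLeffler α β (a * u ^ α)
      = u ^ (β - 1) / Gamma β + a * u ^ (β + α - 1) * mittagLeffler α (β + α) (a * u ^ α) := by
  have hpow : u ^ (β - 1) * u ^ α = u ^ (β + α - 1) := by rw [← rpow_add hu]; ring_nf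
  rw [mittagLeffler_eq_one_div_Gamma_add_mul hα]
  linear_combination (a * mittagLeffler α (β + α) (a * u ^ α)) * hpow

end MittagLeffler

theorem integral_sub_rpow_mul_rpow {σ ν t : ℝ} (hσ : 0 < σ) (hν : 0 < ν) (ht : 0 < t) :
    ∫ u in (0 : ℝ)..t, (t - u) ^ (ν - 1) * u ^ (σ - 1)
      = Gamma σ * Gamma ν / Gamma (σ + ν) * t ^ (σ + ν - 1) := by
  have hB : Complex.betaIntegral σ ν = ((Gamma σ * Gamma ν / Gamma (σ + ν) : ℝ) : ℂ) := by
    have hΓ : Complex.Gamma (σ + ν) ≠ 0 := by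
      rw [← Complex.ofReal_add, Complex.Gamma_ofReal]
      exact_mod_cast (Gamma_pos_of_pos (add_pos hσ hν)).ne'
    push_cast
    rw [← Complex.Gamma_ofReal, ← Complex.Gamma_ofReal, ← Complex.Gamma_ofReal,
      Complex.Gamma_mul_Gamma_eq_betaIntegral (by simpa using hσ) (by simpa using hν),
      Complex.ofReal_add]
    field_simp
  apply Complex.ofReal_injective
  rw [← intervalIntegral.integral_ofReal]
  calc ∫ u in (0 : ℝ)..t, (((t - u) ^ (ν - 1) * u ^ (σ - 1) : ℝ) : ℂ)
      = ∫ u in (0 : ℝ)..t, (u : ℂ) ^ ((σ : ℂ) - 1) * ((t : ℂ) - u) ^ ((ν : ℂ) - 1) := by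
        refine intervalIntegral.integral_congr fun u hu => ?_
        rw [uIcc_of_le ht.le] at hu
        rw [Complex.ofReal_mul, Complex.ofReal_cpow hu.1,
          Complex.ofReal_cpow (sub_nonneg.2 hu.2), mul_comm]
        push_cast
        ring_nf
    _ = (t : ℂ) ^ ((σ : ℂ) + ν - 1) * Complex.betaIntegral σ ν :=
        Complex.betaIntegral_scaled _ _ ht
    _ = _ := by
        rw [hB, ← Complex.ofReal_one, ← Complex.ofReal_add, ← Complex.ofReal_sub,
          ← Complex.ofReal_cpow ht.le, ← Complex.ofReal_mul, mul_comm]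

theorem intervalIntegrable_sub_rpow_mul_rpow {σ ν t : ℝ} (hσ : 0 < σ) (hν : 0 < ν)
    (ht : 0 < t) :
    IntervalIntegrable (fun u => (t - u) ^ (ν - 1) * u ^ (σ - 1)) volume 0 t := by
  refine intervalIntegrable_of_integral_ne_zero ?_
  rw [integral_sub_rpow_mul_rpow hσ hν ht]
  have := Gamma_pos_of_pos hσ
  have := Gamma_pos_of_pos hν
  have := Gamma_pos_of_pos (add_pos hσ hν)
  positivity

section RiemannLiouville

variable {ν t : ℝ}

theorem riemannLiouvilleIntegral_congr {f g : ℝ → ℝ} (ht : 0 ≤ t)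
    (h : ∀ u ∈ Ioc 0 t, f u = g u) :
    riemannLiouvilleIntegral ν f t = riemannLiouvilleIntegral ν g t := by
  unfold riemannLiouvilleIntegral
  congr 1
  refine intervalIntegral.integral_congr_ae (Eventually.of_forall fun u hu => ?_)
  rw [uIoc_of_le ht] at hu
  rw [h u hu]

theorem riemannLiouvilleIntegral_const_mul_sub (r : ℝ) {f g : ℝ → ℝ}
    (hf : IntervalIntegrable (fun u => (t - u) ^ (ν - 1) * f u) volume 0 t)
    (hg : IntervalIntegrable (fun u => (t - u) ^ (ν - 1) * g u) volume 0 t) :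
    riemannLiouvilleIntegral ν (fun u => r * (f u - g u)) t
      = r * (riemannLiouvilleIntegral ν f t - riemannLiouvilleIntegral ν g t) := by
  unfold riemannLiouvilleIntegral
  simp only [mul_left_comm _ r, mul_sub]
  rw [intervalIntegral.integral_sub (hf.const_mul r) (hg.const_mul r),
    intervalIntegral.integral_const_mul, intervalIntegral.integral_const_mul]
  ring

variable {α β : ℝ}

theorem intervalIntegrable_sub_rpow_mul_rpow_mul_mittagLeffler
    (hα : 0 < α) (hβ : 0 < β) (hν : 0 < ν) (ht : 0 < t) (a : ℝ) :
    IntervalIntegrable (fun u => (t - u) ^ (ν - 1) * (u ^ (β - 1) * mittagLeffler α β (a * u ^ α)))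
      volume 0 t := by
  have hE : ContinuousOn (fun u => mittagLeffler α β (a * u ^ α)) (uIcc 0 t) :=
    (continuous_mittagLeffler hα β).comp_continuousOn
      (continuousOn_const.mul (continuousOn_id.rpow_const fun _ _ => Or.inr hα.le))
  simpa only [mul_assoc] using (intervalIntegrable_sub_rpow_mul_rpow hβ hν ht).mul_continuousOn hE

theorem integral_sub_rpow_mul_mittagLeffler_term
    (hα : 0 < α) (hβ : 0 < β) (hν : 0 < ν) (ht : 0 < t) (a : ℝ) (k : ℕ) :
    ∫ u in (0 : ℝ)..t, a ^ k / Gamma (β + k * α) * ((t - u) ^ (ν - 1) * u ^ (β + k * α - 1))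
      = Gamma ν * (a ^ k / Gamma (β + ν + k * α) * t ^ (β + ν + k * α - 1)) := by
  have hΓ : Gamma (β + k * α) ≠ 0 := (Gamma_pos_of_pos (by positivity)).ne'
  rw [intervalIntegral.integral_const_mul, integral_sub_rpow_mul_rpow (by positivity) hν ht,
    add_right_comm]
  field_simp

theorem riemannLiouvilleIntegral_rpow_mul_mittagLeffler
    (hα : 0 < α) (hβ : 0 < β) (hν : 0 < ν) (ht : 0 < t) (a : ℝ) :
    riemannLiouvilleIntegral ν (fun u => u ^ (β - 1) * mittagLeffler α β (a * u ^ α)) t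
      = t ^ (β + ν - 1) * mittagLeffler α (β + ν) (a * t ^ α) := by
  set F : ℝ → ℕ → ℝ → ℝ := fun a k u =>
    a ^ k / Gamma (β + k * α) * ((t - u) ^ (ν - 1) * u ^ (β + k * α - 1))
  have hF_int (k : ℕ) : IntegrableOn (F a k) (Ioc 0 t) :=
    ((intervalIntegrable_iff_integrableOn_Ioc_of_le ht.le).1
      (intervalIntegrable_sub_rpow_mul_rpow (by positivity) hν ht)).const_mul _
  have hF_norm (k : ℕ) : ∫ u in Ioc 0 t, ‖F a k u‖ = ∫ u in Ioc 0 t, F |a| k u := by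
    refine setIntegral_congr_fun measurableSet_Ioc fun u hu => ?_
    have hΓ := Gamma_pos_of_pos (by positivity : 0 < β + k * α)
    have hK : 0 ≤ (t - u) ^ (ν - 1) * u ^ (β + k * α - 1) :=
      mul_nonneg (rpow_nonneg (sub_nonneg.2 hu.2) _) (rpow_nonneg hu.1.le _)
    rw [norm_mul, norm_div, norm_pow, Real.norm_of_nonneg hΓ.le, Real.norm_of_nonneg hK,
      Real.norm_eq_abs]
  have hF_sum : Summable fun k => ∫ u in Ioc 0 t, ‖F a k u‖ := by
    simp only [hF_norm, ← intervalIntegral.integral_of_le ht.le, F,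
      integral_sub_rpow_mul_mittagLeffler_term hα hβ hν ht]
    exact (hasSum_rpow_mul_mittagLeffler hα (β + ν) |a| ht).summable.mul_left _
  have hF_tsum : ∀ u ∈ Ioc 0 t,
      (t - u) ^ (ν - 1) * (u ^ (β - 1) * mittagLeffler α β (a * u ^ α)) = ∑' k, F a k u := by
    intro u hu
    rw [← (hasSum_rpow_mul_mittagLeffler hα β a hu.1).tsum_eq, ← tsum_mul_left]
    exact tsum_congr fun k => mul_left_comm _ _ _
  unfold riemannLiouvilleIntegral
  rw [intervalIntegral.integral_of_le ht.le, setIntegral_congr_fun measurableSet_Ioc hF_tsum,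
    ← integral_tsum_of_summable_integral_norm hF_int hF_sum]
  simp only [F, ← intervalIntegral.integral_of_le ht.le,
    integral_sub_rpow_mul_mittagLeffler_term hα hβ hν ht]
  rw [tsum_mul_left, (hasSum_rpow_mul_mittagLeffler hα (β + ν) a ht).tsum_eq]
  field_simp [(Gamma_pos_of_pos hν).ne']

end RiemannLiouville

theorem two_rate_solves_fractional_integral_equation
    (c d μ ν N₀ : ℝ) (hc : 0 < c) (hd : 0 < d) (hcd : c ≠ d) (hν : 0 < ν) (hμν : ν < μ)
    (N : ℝ → ℝ)
    (hN : ∀ t : ℝ, 0 < t →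
      N t = N₀ * t ^ (μ - ν - 1) / (c ^ ν - d ^ ν) *
        ((∑' k : ℕ, (-(d ^ ν * t ^ ν)) ^ k / Real.Gamma ((μ - ν) + k * ν))
          - ∑' k : ℕ, (-(c ^ ν * t ^ ν)) ^ k / Real.Gamma ((μ - ν) + k * ν))) :
    ∀ t : ℝ, 0 < t →
      N t - N₀ * t ^ (μ - 1) * (∑' k : ℕ, (-(d ^ ν * t ^ ν)) ^ k / Real.Gamma (μ + k * ν))
        = -c ^ ν * ((1 / Real.Gamma ν) * ∫ u in (0 : ℝ)..t, (t - u) ^ (ν - 1) * N u) := by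
  intro t ht
  have hβ : 0 < μ - ν := sub_pos.2 hμν
  have hden : c ^ ν - d ^ ν ≠ 0 :=
    sub_ne_zero.2 fun h => hcd ((rpow_left_inj hc.le hd.le hν.ne').1 h)
  set F : ℝ → ℝ → ℝ := fun a u => u ^ (μ - ν - 1) * mittagLeffler ν (μ - ν) (a * u ^ ν)
  have hNF : ∀ u ∈ Ioc 0 t, N u = N₀ / (c ^ ν - d ^ ν) * (F (-d ^ ν) u - F (-c ^ ν) u) := by
    intro u hu
    simp only [hN u hu.1, F, mittagLeffler, neg_mul]
    ring
  have hRL (a : ℝ) :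
      riemannLiouvilleIntegral ν (F a) t = t ^ (μ - 1) * mittagLeffler ν μ (a * t ^ ν) := by
    simpa only [sub_add_cancel] using
      riemannLiouvilleIntegral_rpow_mul_mittagLeffler hν hβ hν ht a
  have hshift (a : ℝ) :
      F a t
        = t ^ (μ - ν - 1) / Gamma (μ - ν) + a * t ^ (μ - 1) * mittagLeffler ν μ (a * t ^ ν) := by
    simpa only [sub_add_cancel] using rpow_mul_mittagLeffler_eq_div_Gamma_add hν (μ - ν) a ht
  show N t - N₀ * t ^ (μ - 1) * mittagLeffler ν μ (-(d ^ ν * t ^ ν))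
    = -c ^ ν * riemannLiouvilleIntegral ν N t
  rw [riemannLiouvilleIntegral_congr ht.le hNF, riemannLiouvilleIntegral_const_mul_sub _
    (intervalIntegrable_sub_rpow_mul_rpow_mul_mittagLeffler hν hβ hν ht _)
    (intervalIntegrable_sub_rpow_mul_rpow_mul_mittagLeffler hν hβ hν ht _), hRL, hRL,
    hNF t ⟨ht, le_rfl⟩, hshift, hshift, ← neg_mul]
  field_simp
  ring
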